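/- Let Ĝ be a spectral-extremal gem-free graph (maximizing ρ over gem-free graphs with m ≥ 23 edges, m odd, no isolated vertices, excluding S_{(m+3)/2,2}), with extremal vertex û. Then e(N_+(û)) ≥ 4, where N_+(û) is the set of non-isolated vertices of Ĝ[N(û)]. -/

import Mathlib

open scoped Classical
open SimpleGraph Matrix

def ContainsCopy {α β : Type*} (H : SimpleGraph α) (G : SimpleGraph β) : Prop :=
  ∃ f : α ↪ β, ∀ a b, H.Adj a b → G.Adj (f a) (f b)

def gem : SimpleGraph (Fin 5) :=
  SimpleGraph.fromRel (fun a b => (b.val = a.val + 1 ∧ b.val ≤ 3) ∨ b = 4)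

def bookS (k : ℕ) : SimpleGraph (Fin 2 ⊕ Fin k) :=
  SimpleGraph.fromRel (fun a _ => a.isLeft = true)

def pendantS (s t : ℕ) : SimpleGraph (Fin 2 ⊕ (Fin s ⊕ Fin t)) :=
  SimpleGraph.fromRel (fun a b =>
    match a, b with
    | Sum.inl _, Sum.inl _ => True
    | Sum.inl _, Sum.inr (Sum.inl _) => True
    | Sum.inl i, Sum.inr (Sum.inr _) => i = 0
    | _, _ => False)

def starG (r : ℕ) : SimpleGraph (Fin (r + 1)) :=
  SimpleGraph.fromRel (fun a _ => a = 0)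

noncomputable def specRad {V : Type*} [Fintype V] (G : SimpleGraph V) : ℝ :=
  sSup {μ : ℝ | Module.End.HasEigenvalue (Matrix.mulVecLin (G.adjMatrix ℝ)) μ}

noncomputable def edgeCount {V : Type*} [Fintype V] (G : SimpleGraph V) : ℕ :=
  G.edgeFinset.card

noncomputable def edgesIn {V : Type*} [Fintype V] (G : SimpleGraph V) (S : Finset V) : ℕ :=
  (G.edgeFinset.filter (fun e => ∀ v ∈ e, v ∈ S)).card

noncomputable def N0 {V : Type*} [Fintype V] (G : SimpleGraph V) (u : V) : Finset V :=
  (G.neighborFinset u).filter (fun v => ∀ w ∈ G.neighborFinset u, ¬ G.Adj v w)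

noncomputable def Nplus {V : Type*} [Fintype V] (G : SimpleGraph V) (u : V) : Finset V :=
  G.neighborFinset u \ N0 G u

noncomputable def Wset {V : Type*} [Fintype V] (G : SimpleGraph V) (u : V) : Finset V :=
  Finset.univ \ insert u (G.neighborFinset u)

def InFamily (m : ℕ) {V : Type*} [Fintype V] (G : SimpleGraph V) : Prop :=
  ¬ ContainsCopy gem G ∧ edgeCount G = m ∧ (∀ v : V, ∃ w, G.Adj v w) ∧
    ¬ Nonempty (G ≃g bookS ((m - 1) / 2))

def MaxInFamily (m : ℕ) {V : Type*} [Fintype V] (G : SimpleGraph V) : Prop :=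
  InFamily m G ∧ ∀ (n : ℕ) (H : SimpleGraph (Fin n)), InFamily m H → specRad H ≤ specRad G

def IsCutVertex {V : Type*} (G : SimpleGraph V) (v : V) : Prop :=
  ∃ a b : {x : V // x ≠ v}, G.Reachable a.1 b.1 ∧
    ¬ (G.induce {x : V | x ≠ v}).Reachable a b

/-!
Counting walks of length two from `u` gives
`ρ² x_u = ∑_{v ∼ u} ∑_{w ∼ v} x_w ≤ (∑_{v ∼ u} d(v)) x_u ≤ (m + e(N(u))) x_u`,
because an edge is counted once for each of its ends in `N(u)`. Conversely, for `m = 2k + 3` the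
graph `pendantS k 2` (an edge `h₀h₁` with `k` common neighbours and two pendant vertices at `h₀`)
competes with `Ĝ`: it is gem-free, since `{h₀, h₁}` covers its edges while the gem has no vertex
cover of size two, and it is not a book. It has an eigenvalue `λ > 5` with `λ² > λ + 2k + 1`.
Hence `m + e(N(u)) ≥ ρ² ≥ λ² > m + 3`, and every edge inside `N(u)` lies in `N₊(u)`.
-/

open Finset Sum

section Counting

variable {V : Type*} [Fintype V] {G : SimpleGraph V}

lemma card_filter_mem_sym2_le (S : Finset V) (e : Sym2 V) :
    #{v ∈ S | v ∈ e} ≤ 1 + if ∀ v ∈ e, v ∈ S then 1 else 0 := by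
  induction e with | _ a b =>
  have hsub : {v ∈ S | v ∈ s(a, b)} ⊆ {a, b} := fun v hv => by simp_all
  split_ifs with hab
  · exact (card_le_card hsub).trans card_le_two
  · refine card_le_one.mpr fun v hv w hw => ?_
    simp only [mem_filter, Sym2.mem_iff] at hv hw hab
    grind

lemma sum_degree_le_edgeCount_add_edgesIn (S : Finset V) :
    ∑ v ∈ S, G.degree v ≤ edgeCount G + edgesIn G S :=
  calc ∑ v ∈ S, G.degree v
      = ∑ e ∈ G.edgeFinset, #{v ∈ S | v ∈ e} := by
        simp only [← card_incidenceFinset_eq_degree, incidenceFinset_eq_filter, card_filter]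
        exact sum_comm
    _ ≤ ∑ e ∈ G.edgeFinset, (1 + if ∀ v ∈ e, v ∈ S then 1 else 0) :=
        sum_le_sum fun e _ => card_filter_mem_sym2_le S e
    _ = edgeCount G + edgesIn G S := by
        rw [sum_add_distrib, ← card_filter, edgesIn, edgeCount]
        simp

lemma edgesIn_Nplus (u : V) : edgesIn G (Nplus G u) = edgesIn G (G.neighborFinset u) := by
  unfold edgesIn
  congr 1
  refine filter_congr fun e he => ⟨fun h v hv => (mem_sdiff.mp (h v hv)).1, fun h v hv => ?_⟩
  induction e with | _ a b =>
  have hab : G.Adj a b := mem_edgeFinset.mp he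
  simp only [Nplus, N0, mem_sdiff, mem_filter, not_and, not_forall, not_not]
  refine ⟨h v hv, fun _ => ?_⟩
  rcases Sym2.mem_iff.mp hv with rfl | rfl
  exacts [⟨b, h b (Sym2.mem_mk_right _ _), hab⟩, ⟨a, h a (Sym2.mem_mk_left _ _), hab.symm⟩]

end Counting

section Spectral

variable {V : Type*} [Fintype V] {G : SimpleGraph V}

lemma le_specRad_of_mulVec_eq {μ : ℝ} {y : V → ℝ} (hy : y ≠ 0)
    (h : G.adjMatrix ℝ *ᵥ y = μ • y) : μ ≤ specRad G :=
  le_csSup (Module.End.finite_hasEigenvalue _).bddAbove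
    (Module.End.hasEigenvalue_of_hasEigenvector ⟨Module.End.mem_eigenspace_iff.mpr h, hy⟩)

lemma specRad_congr {W : Type*} [Fintype W] {H : SimpleGraph W} (φ : G ≃g H) :
    specRad G = specRad H := by
  have hadj : H.adjMatrix ℝ = Matrix.reindexAlgEquiv ℝ ℝ φ.toEquiv (G.adjMatrix ℝ) := by
    ext i j
    simp [Matrix.coe_reindexAlgEquiv, adjMatrix_apply, ← φ.symm.map_adj_iff]
    rfl
  unfold specRad
  simp only [Module.End.hasEigenvalue_iff_mem_spectrum, ← Matrix.toLin'_apply',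
    Matrix.spectrum_toLin', hadj, AlgEquiv.spectrum_eq]

lemma mul_apply_eq_sum_neighbor {μ : ℝ} {x : V → ℝ} (h : G.adjMatrix ℝ *ᵥ x = μ • x) (v : V) :
    μ * x v = ∑ w ∈ G.neighborFinset v, x w := by
  simpa [adjMatrix_mulVec_apply] using (congrFun h v).symm

lemma sq_le_edgeCount_add_edgesIn {μ : ℝ} {x : V → ℝ} (h : G.adjMatrix ℝ *ᵥ x = μ • x)
    {u : V} (hxu : 0 < x u) (hu : ∀ v, x v ≤ x u) :
    μ ^ 2 ≤ edgeCount G + edgesIn G (G.neighborFinset u) := by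
  refine le_of_mul_le_mul_right ?_ hxu
  calc μ ^ 2 * x u = ∑ v ∈ G.neighborFinset u, ∑ w ∈ G.neighborFinset v, x w := by
        rw [sq, mul_assoc, mul_apply_eq_sum_neighbor h, mul_sum]
        exact sum_congr rfl fun v _ => mul_apply_eq_sum_neighbor h v
    _ ≤ ∑ v ∈ G.neighborFinset u, (G.degree v : ℝ) * x u :=
        sum_le_sum fun v _ => by
          simpa using sum_le_card_nsmul (G.neighborFinset v) x (x u) fun w _ => hu w
    _ ≤ (edgeCount G + edgesIn G (G.neighborFinset u)) * x u := by
        rw [← sum_mul]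
        gcongr
        exact_mod_cast sum_degree_le_edgeCount_add_edgesIn _

lemma InFamily.of_iso {m : ℕ} {W : Type*} [Fintype W] {H : SimpleGraph W} (hG : InFamily m G)
    (φ : G ≃g H) : InFamily m H := by
  obtain ⟨hfree, hm, hadj, hbook⟩ := hG
  refine ⟨fun ⟨f, hf⟩ => hfree ⟨f.trans φ.symm.toEquiv.toEmbedding, fun a b h => ?_⟩, ?_,
    fun v => ?_, fun ⟨ψ⟩ => hbook ⟨φ.trans ψ⟩⟩
  · exact φ.symm.map_adj_iff.mpr (hf a b h)
  · rw [← hm, edgeCount, edgeCount, φ.card_edgeFinset_eq]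
  · obtain ⟨w, hw⟩ := hadj (φ.symm v)
    exact ⟨φ w, by simpa using φ.map_adj_iff.mpr hw⟩

lemma MaxInFamily.specRad_le {m : ℕ} (hG : MaxInFamily m G) {W : Type*} [Fintype W]
    {H : SimpleGraph W} (hH : InFamily m H) : specRad H ≤ specRad G := by
  let φ := Iso.map (Fintype.equivFin W) H
  rw [specRad_congr φ]
  exact hG.2 _ _ (hH.of_iso φ)

end Spectral

lemma ContainsCopy.exists_isVertexCover {α β : Type*} {H : SimpleGraph α} {G : SimpleGraph β}
    (hHG : ContainsCopy H G) {c : Finset β} (hc : G.IsVertexCover c) :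
    ∃ c' : Finset α, #c' ≤ #c ∧ H.IsVertexCover c' := by
  obtain ⟨f, hf⟩ := hHG
  let g : H →g G := ⟨f, hf _ _⟩
  refine ⟨c.preimage f f.injective.injOn, (card_preimage ..).trans_le (card_filter_le _ _), ?_⟩
  rw [coe_preimage]
  exact hc.preimage g

lemma gem_not_isVertexCover_of_card_le_two (c : Finset (Fin 5)) (hc : #c ≤ 2) :
    ¬ gem.IsVertexCover (c : Set (Fin 5)) := by
  simp only [IsVertexCover, gem, fromRel_adj, mem_coe]
  revert c
  decide

lemma two_le_bookS_degree {k : ℕ} (hk : 0 < k) (v : Fin 2 ⊕ Fin k) : 2 ≤ (bookS k).degree v := by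
  rw [← card_neighborFinset_eq_degree, neighborFinset_eq_filter, card_filter,
    Fintype.sum_sum_type]
  rcases v with i | j
  · fin_cases i <;> simp [bookS, Fin.sum_univ_two] <;> omega
  · simp [bookS]

section Pendant

variable {s t : ℕ}

lemma pendantS_exists_adj (v : Fin 2 ⊕ (Fin s ⊕ Fin t)) : ∃ w, (pendantS s t).Adj v w := by
  rcases v with i | p | q
  · fin_cases i
    exacts [⟨inl 1, by simp [pendantS]⟩, ⟨inl 0, by simp [pendantS]⟩]
  · exact ⟨inl 0, by simp [pendantS]⟩
  · exact ⟨inl 0, by simp [pendantS]⟩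

lemma pendantS_isVertexCover : (pendantS s t).IsVertexCover {inl 0, inl 1} := by
  rintro (i | a) (j | b) h
  · fin_cases i <;> simp
  · fin_cases i <;> simp
  · fin_cases j <;> simp
  · simp [pendantS] at h

lemma not_containsCopy_gem_pendantS : ¬ ContainsCopy gem (pendantS s t) := by
  intro h
  obtain ⟨c, hc, hcover⟩ :=
    h.exists_isVertexCover (c := {inl 0, inl 1}) (by simpa using pendantS_isVertexCover)
  exact gem_not_isVertexCover_of_card_le_two c (hc.trans card_le_two) hcover

lemma pendantS_degree_pendant (q : Fin t) : (pendantS s t).degree (inr (inr q)) = 1 := by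
  rw [← card_neighborFinset_eq_degree, neighborFinset_eq_filter, card_filter,
    Fintype.sum_sum_type, Fintype.sum_sum_type]
  simp [pendantS]

lemma pendantS_not_iso_bookS {k : ℕ} (hk : 0 < k) (ht : 0 < t) :
    ¬ Nonempty (pendantS s t ≃g bookS k) := by
  rintro ⟨φ⟩
  have := two_le_bookS_degree hk (φ (inr (inr ⟨0, ht⟩)))
  rw [φ.degree_eq, pendantS_degree_pendant] at this
  omega

lemma pendantS_edgeCount : edgeCount (pendantS s t) = 2 * s + t + 1 := by
  have hsum : ∑ v, (pendantS s t).degree v = 2 * (2 * s + t + 1) := by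
    simp only [← card_neighborFinset_eq_degree, neighborFinset_eq_filter, card_filter,
      Fintype.sum_sum_type]
    simp [pendantS, Fin.sum_univ_two]
    ring
  have := (pendantS s t).sum_degrees_eq_twice_card_edges
  unfold edgeCount
  omega

noncomputable def pendantSVec (b c d : ℝ) : Fin 2 ⊕ (Fin s ⊕ Fin t) → ℝ :=
  Sum.elim ![1, b] (Sum.elim (fun _ => c) (fun _ => d))

lemma pendantS_mulVec {lam b c d : ℝ}
    (h₀ : b + s * c + t * d = lam) (h₁ : 1 + s * c = lam * b) (h₂ : 1 + b = lam * c)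
    (h₃ : 1 = lam * d) :
    (pendantS s t).adjMatrix ℝ *ᵥ pendantSVec b c d = lam • pendantSVec b c d := by
  funext v
  rw [adjMatrix_mulVec_apply, neighborFinset_eq_filter, sum_filter,
    Fintype.sum_sum_type, Fintype.sum_sum_type]
  rcases v with i | p | q
  · fin_cases i <;> simp [pendantS, pendantSVec, Fin.sum_univ_two] <;> linarith
  · simp [pendantS, pendantSVec]; linarith
  · simp [pendantS, pendantSVec]; linarith

lemma pendantS_inFamily (k : ℕ) : InFamily (2 * k + 3) (pendantS k 2) := by
  refine ⟨not_containsCopy_gem_pendantS, by rw [pendantS_edgeCount], pendantS_exists_adj, ?_⟩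
  rw [show (2 * k + 3 - 1) / 2 = k + 1 by omega]
  exact pendantS_not_iso_bookS k.succ_pos two_pos

end Pendant

lemma exists_quartic_root_gt_five {k : ℕ} (hk : 10 ≤ k) :
    ∃ lam : ℝ, 5 < lam ∧ (lam ^ 2 - lam - 2 * k - 1) * (lam ^ 2 + lam - 1) = 1 := by
  have hk' : (10 : ℝ) ≤ k := by exact_mod_cast hk
  let f : ℝ → ℝ := fun x => (x ^ 2 - x - 2 * k - 1) * (x ^ 2 + x - 1)
  -- `f 5 = 29 (19 - 2k)`: this is where `m ≥ 23` enters.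
  have hf5 : f 5 < 1 := by simp only [f]; nlinarith
  have hfk : 1 < f k := by
    have h₁ : 2 ≤ (k : ℝ) ^ 2 - k - 2 * k - 1 := by nlinarith
    have h₂ : 1 ≤ (k : ℝ) ^ 2 + k - 1 := by nlinarith
    simp only [f]; nlinarith
  obtain ⟨lam, hlam, hroot⟩ := intermediate_value_Ioo (by linarith : (5 : ℝ) ≤ k)
    (by fun_prop : ContinuousOn f _) ⟨hf5, hfk⟩
  exact ⟨lam, hlam.1, hroot⟩

lemma sqrt_lt_specRad_pendantS {k : ℕ} (hk : 10 ≤ k) :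
    √(2 * k + 6) < specRad (pendantS k 2) := by
  obtain ⟨lam, h5, hroot⟩ := exists_quartic_root_gt_five hk
  have hlam : lam ^ 2 + lam ≠ 0 := by positivity
  -- Eliminating `c = (1 + b) / lam` and `d = 1 / lam` from the equations of `pendantS_mulVec`
  -- forces `b = 1 - 2 / (lam ^ 2 + lam)` and leaves exactly the quartic equation of `lam`.
  have hle : lam ≤ specRad (pendantS k 2) := by
    refine le_specRad_of_mulVec_eq (y := pendantSVec (1 - 2 / (lam ^ 2 + lam))
      ((2 - 2 / (lam ^ 2 + lam)) / lam) (1 / lam))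
      (fun h => by simpa [pendantSVec] using congrFun h (inl 0)) (pendantS_mulVec ?_ ?_ ?_ ?_)
    all_goals field_simp
    exacts [by linear_combination -hroot, by linear_combination -hroot, by ring]
  have hsq : 2 * k + 6 < lam ^ 2 := by nlinarith
  exact ((Real.sqrt_lt' (by linarith)).mpr hsq).trans_le hle

theorem stmt9 {V : Type*} [Fintype V] (G : SimpleGraph V) (m : ℕ)
    (hodd : Odd m) (hm : 23 ≤ m) (hmax : MaxInFamily m G)
    (x : V → ℝ) (hx : ∀ v, 0 < x v)
    (heig : G.adjMatrix ℝ *ᵥ x = specRad G • x)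
    (u : V) (hu : ∀ v, x v ≤ x u) :
    4 ≤ edgesIn G (Nplus G u) := by
  obtain ⟨k, rfl⟩ : ∃ k, m = 2 * k + 3 := by
    obtain ⟨r, rfl⟩ := hodd
    exact ⟨r - 1, by omega⟩
  have hlower : √(2 * k + 6) < specRad G :=
    (sqrt_lt_specRad_pendantS (by omega)).trans_le (hmax.specRad_le (pendantS_inFamily k))
  have hupper := sq_le_edgeCount_add_edgesIn heig (hx u) hu
  rw [hmax.1.2.1] at hupper
  have h3 : (3 : ℝ) < edgesIn G (G.neighborFinset u) := by
    push_cast at hupper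
    linarith [Real.lt_sq_of_sqrt_lt hlower]
  rw [edgesIn_Nplus]
  exact_mod_cast h3
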